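/- A run DAG G is rejecting if and only if it has an F-finite level, i.e., a level k such that every F-node on a level strictly greater than k is finite in G'. -/

import Mathlib

/-- Strict lexicographic order on finite 0-1 profiles. -/
def ProfLt (a b : List Bool) : Prop := List.Lex (· < ·) a b

/-- Non-strict lexicographic order on finite 0-1 profiles. -/
def ProfLe (a b : List Bool) : Prop := a = b ∨ ProfLt a b

/-- A nondeterministic Büchi automaton on infinite words. -/
structure NBW (Q : Type) (σ : Type) where
  init : Set Q
  trans : Q → σ → Set Q
  acc : Q → Bool

namespace NBW

variable {Q σ : Type} (A : NBW Q σ) (w : ℕ → σ)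

/-- `(q,i)` is a vertex of the run DAG of `A` on `w`. -/
def InDag (v : Q × ℕ) : Prop :=
  ∃ p : ℕ → Q, p 0 ∈ A.init ∧ (∀ j, j < v.2 → p (j + 1) ∈ A.trans (p j) (w j)) ∧ p v.2 = v.1

/-- Edge of the run DAG. -/
def Edge (u v : Q × ℕ) : Prop :=
  A.InDag w u ∧ v.2 = u.2 + 1 ∧ v.1 ∈ A.trans u.1 (w u.2)

/-- An infinite initial path through the (sub-)DAG with edge relation `E`. -/
def IsPath (E : Q × ℕ → Q × ℕ → Prop) (π : ℕ → Q × ℕ) : Prop :=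
  (π 0).1 ∈ A.init ∧ (π 0).2 = 0 ∧ ∀ i, E (π i) (π (i + 1))

/-- An accepting path: initial and visiting F-nodes infinitely often. -/
def AcceptingPath (E : Q × ℕ → Q × ℕ → Prop) (π : ℕ → Q × ℕ) : Prop :=
  A.IsPath E π ∧ ∀ N, ∃ i, N ≤ i ∧ A.acc (π i).1 = true

/-- Profile (sequence of acceptance labels) of the first `i+1` states of `p`. -/
def profileOf (p : ℕ → Q) (i : ℕ) : List Bool :=
  (List.range (i + 1)).map fun j => A.acc (p j)

/-- `p` encodes a finite initial run ending at node `v`. -/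
def FinRunTo (p : ℕ → Q) (v : Q × ℕ) : Prop :=
  p 0 ∈ A.init ∧ (∀ j, j < v.2 → p (j + 1) ∈ A.trans (p j) (w j)) ∧ p v.2 = v.1

/-- `h` assigns to each node the lexicographically maximal profile
over all finite initial runs to it. -/
def IsProfileFun (h : Q × ℕ → List Bool) : Prop :=
  ∀ v, A.InDag w v →
    (∃ p, A.FinRunTo w p v ∧ A.profileOf p v.2 = h v) ∧
    ∀ p, A.FinRunTo w p v → ProfLe (A.profileOf p v.2) (h v)

/-- Edges of the pruned DAG `G'`: only edges from predecessors of
lexicographically maximal profile are kept. -/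
def Edge' (h : Q × ℕ → List Bool) (u v : Q × ℕ) : Prop :=
  A.Edge w u v ∧ ∀ u', A.Edge w u' v → ¬ ProfLt (h u) (h u')

/-- `v` is finite in `G'`: it has finitely many descendants in `G'`. -/
def FiniteIn' (h : Q × ℕ → List Bool) (v : Q × ℕ) : Prop :=
  Set.Finite {u | Relation.ReflTransGen (A.Edge' w h) v u}

/-- Vertices of `G''`: vertices of the run DAG that are not finite in `G'`. -/
def InDag'' (h : Q × ℕ → List Bool) (v : Q × ℕ) : Prop :=
  A.InDag w v ∧ ¬ A.FiniteIn' w h v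

/-- Edges of `G''`. -/
def Edge'' (h : Q × ℕ → List Bool) (u v : Q × ℕ) : Prop :=
  A.Edge' w h u v ∧ A.InDag'' w h u ∧ A.InDag'' w h v

/-- `lam` is the retrospective labeling `λ^k`: ⊤ at levels ≤ k, ⊥ on F-nodes
after level k, inherited along `G'`-edges otherwise. -/
def IsRetroLabeling (h : Q × ℕ → List Bool) (k : ℕ) (lam : Q × ℕ → Bool) : Prop :=
  (∀ u, A.InDag w u → u.2 ≤ k → lam u = true) ∧
  (∀ u, A.InDag w u → k < u.2 → A.acc u.1 = true → lam u = false) ∧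
  (∀ u v, k < v.2 → A.acc v.1 = false → A.Edge' w h u v → lam v = lam u)

/-- A labeling is legal when every ⊥-labeled node is finite in `G'`. -/
def Legal (h : Q × ℕ → List Bool) (lam : Q × ℕ → Bool) : Prop :=
  ∀ u, A.InDag w u → lam u = false → A.FiniteIn' w h u

/-- `α(u)`: the number of ⊤-labeled profile-equivalence classes on `u`'s level
whose profile is strictly greater than `h u`. -/
noncomputable def alphaCount (h : Q × ℕ → List Bool) (lam : Q × ℕ → Bool) (u : Q × ℕ) : ℕ :=
  Set.ncard {p : List Bool | ∃ v, A.InDag w v ∧ v.2 = u.2 ∧ lam v = true ∧ h v = p ∧ ProfLt (h u) p}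

/-- The `k`-retrospective ranking (with top rank `m`). -/
noncomputable def retroRank (h : Q × ℕ → List Bool) (lam : Q × ℕ → Bool) (k m : ℕ)
    (u : Q × ℕ) : ℕ :=
  if u.2 ≤ k then m
  else if lam u then 2 * A.alphaCount w h lam u + 1 else 2 * A.alphaCount w h lam u

/-- `m = 2 |Q \ F|`. -/
def mBound [Fintype Q] : ℕ :=
  2 * Finset.card (Finset.univ.filter fun q => A.acc q = false)

end NBW

/-!
Along an edge `u → v` of `G'` the maximal profile grows by one letter, `h v = h u ++ [acc v]`,
so profiles are inherited along `G'`-paths, and the last letter of `h v` says whether `v` is an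
F-node.

If `G''` has F-nodes on unboundedly high levels, consider the sets of profiles of `G''`-nodes
on each level. Every `G''`-node has a `G''`-parent and a `G''`-child, so truncation maps the
profiles on level `m` onto those on any level `n ≤ m`; their number is nondecreasing and
bounded by `|Q|`, so from some level `N` on truncation to the first `N + 1` letters is
injective. Some profile `P` on level `N` is the prefix of F-nodes of `G''` on unboundedly high
levels, and any infinite `G''`-path from a node with profile `P` meets, on each of those levels,
a node with the same profile as the F-node there: it visits F infinitely often.

Conversely, given an accepting run, call a node top if it lies on an accepting run and its
profile is maximal among such nodes on its level. The `G'`-parent of a top node is top. If top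
nodes avoided F beyond some level `N`, an accepting run through the top profile at level `N`
would have to follow the top profiles letter by letter and never visit F again. So there are
top F-nodes on arbitrarily high levels; every top node on a higher level descends in `G'` from
a top node on that level, and by pigeonhole one of them has descendants on unboundedly high
levels, so it is infinite in `G'`.
-/

theorem List.append_lt_append_of_length_eq {α : Type*} [LT α] {a b : List α}
    (hlen : a.length = b.length) (hab : a < b) (c d : List α) : a ++ c < b ++ d := by
  induction hab with
  | nil => simp at hlen
  | cons _ ih => exact .cons (ih (by simpa using hlen))
  | rel h => exact .rel h

theorem List.le_of_append_le_append_of_length_eq {α : Type*} [LinearOrder α]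
    {a b c d : List α} (hlen : a.length = b.length) (h : a ++ c ≤ b ++ d) : a ≤ b :=
  not_lt.1 fun hba => not_lt.2 h (List.append_lt_append_of_length_eq hlen.symm hba d c)

theorem List.append_le_append_right_of_length_eq {α : Type*} [LinearOrder α] {a b : List α}
    (hlen : a.length = b.length) (hab : a ≤ b) (c : List α) : a ++ c ≤ b ++ c := by
  rcases hab.eq_or_lt with rfl | hab
  · exact le_rfl
  · exact (List.append_lt_append_of_length_eq hlen hab c c).le

theorem List.le_of_append_singleton_le_append_singleton {α : Type*} [LinearOrder α]
    {a : List α} {x y : α} (h : a ++ [x] ≤ a ++ [y]) : x ≤ y :=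
  not_lt.1 fun hyx => not_lt.2 h (List.append_left_lt (.rel hyx))

theorem exists_seq_of_forall_exists {α : Type*} {p : α → Prop} {r : α → α → Prop}
    (h : ∀ a, p a → ∃ b, r a b ∧ p b) {a : α} (ha : p a) :
    ∃ f : ℕ → α, f 0 = a ∧ ∀ n, r (f n) (f (n + 1)) ∧ p (f n) := by
  choose g hg using fun x : Subtype p => h x.1 x.2
  let next : Subtype p → Subtype p := fun x => ⟨g x, (hg x).2⟩
  refine ⟨fun n => (next^[n] ⟨a, ha⟩).1, rfl, fun n => ⟨?_, (next^[n] ⟨a, ha⟩).2⟩⟩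
  simp only [Function.iterate_succ_apply']
  exact (hg _).1

namespace NBW

variable {Q σ : Type} {A : NBW Q σ} {w : ℕ → σ} {h : Q × ℕ → List Bool}

theorem profLe_iff_le {a b : List Bool} : ProfLe a b ↔ a ≤ b := le_iff_eq_or_lt.symm

theorem FinRunTo.inDag {p : ℕ → Q} {v : Q × ℕ} (hp : A.FinRunTo w p v) : A.InDag w v :=
  ⟨p, hp⟩

variable (A w) in
def IsRun (r : ℕ → Q) : Prop :=
  r 0 ∈ A.init ∧ ∀ i, r (i + 1) ∈ A.trans (r i) (w i)

variable (A w) in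
def IsAcceptingRun (r : ℕ → Q) : Prop :=
  A.IsRun w r ∧ ∀ N, ∃ i, N ≤ i ∧ A.acc (r i) = true

theorem IsRun.finRunTo {r : ℕ → Q} (hr : A.IsRun w r) (n : ℕ) : A.FinRunTo w r (r n, n) :=
  ⟨hr.1, fun j _ => hr.2 j, rfl⟩

theorem IsRun.inDag {r : ℕ → Q} (hr : A.IsRun w r) (n : ℕ) : A.InDag w (r n, n) :=
  (hr.finRunTo n).inDag

theorem IsPath.snd_eq {π : ℕ → Q × ℕ} (hπ : A.IsPath (A.Edge w) π) (i : ℕ) :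
    (π i).2 = i := by
  induction i with
  | zero => exact hπ.2.1
  | succ i ih => rw [(hπ.2.2 i).2.1, ih]

theorem exists_acceptingPath_iff :
    (∃ π, A.AcceptingPath (A.Edge w) π) ↔ ∃ r, A.IsAcceptingRun w r := by
  constructor
  · rintro ⟨π, hπ, hacc⟩
    refine ⟨fun i => (π i).1, ⟨hπ.1, fun i => ?_⟩, hacc⟩
    simpa only [hπ.snd_eq i] using (hπ.2.2 i).2.2
  · rintro ⟨r, hr, hacc⟩
    exact ⟨fun i => (r i, i), ⟨hr.1, rfl, fun i => ⟨hr.inDag i, rfl, hr.2 i⟩⟩, hacc⟩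

theorem isAcceptingRun_splice {p r : ℕ → Q} {v : Q × ℕ} (hp : A.FinRunTo w p v)
    (hjoin : r (v.2 + 1) ∈ A.trans v.1 (w v.2))
    (hr : ∀ i, v.2 < i → r (i + 1) ∈ A.trans (r i) (w i))
    (hacc : ∀ N, ∃ i, N ≤ i ∧ A.acc (r i) = true) :
    A.IsAcceptingRun w (fun i => if i ≤ v.2 then p i else r i) := by
  refine ⟨⟨by simpa using hp.1, fun i => ?_⟩, fun N => ?_⟩
  · rcases lt_trichotomy i v.2 with hi | rfl | hi
    · simpa [hi.le, Nat.succ_le_of_lt hi] using hp.2.1 i hi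
    · simpa [hp.2.2] using hjoin
    · simpa [show ¬ i ≤ v.2 by omega, show ¬ i + 1 ≤ v.2 by omega] using hr i hi
  · obtain ⟨i, hi, hi_acc⟩ := hacc (max N (v.2 + 1))
    exact ⟨i, by omega, by simpa [show ¬ i ≤ v.2 by omega] using hi_acc⟩

theorem length_profileOf (p : ℕ → Q) (n : ℕ) : (A.profileOf p n).length = n + 1 := by
  simp [profileOf]

theorem getLast?_profileOf (p : ℕ → Q) (n : ℕ) :
    (A.profileOf p n).getLast? = some (A.acc (p n)) := by
  simp [profileOf, List.getLast?_map, List.getLast?_range]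

theorem profileOf_succ (p : ℕ → Q) (n : ℕ) :
    A.profileOf p (n + 1) = A.profileOf p n ++ [A.acc (p (n + 1))] := by
  simp [profileOf, List.range_succ]

theorem profileOf_congr {p q : ℕ → Q} {n : ℕ} (hpq : ∀ j ≤ n, p j = q j) :
    A.profileOf p n = A.profileOf q n :=
  List.map_congr_left fun j hj => by
    rw [hpq j (Nat.lt_succ_iff.1 (List.mem_range.1 hj))]

theorem FinRunTo.extend {p : ℕ → Q} {u v : Q × ℕ} (hp : A.FinRunTo w p u)
    (hv2 : v.2 = u.2 + 1) (hv1 : v.1 ∈ A.trans u.1 (w u.2)) :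
    A.FinRunTo w (fun i => if i ≤ u.2 then p i else v.1) v ∧
      A.profileOf (fun i => if i ≤ u.2 then p i else v.1) v.2 =
        A.profileOf p u.2 ++ [A.acc v.1] := by
  refine ⟨⟨by simpa using hp.1, fun j hj => ?_, by simp [hv2]⟩, ?_⟩
  · rcases Nat.lt_or_ge j u.2 with hj' | hj'
    · simpa [hj'.le, Nat.succ_le_of_lt hj'] using hp.2.1 j hj'
    · obtain rfl : j = u.2 := by omega
      simpa [hp.2.2] using hv1
  · rw [hv2, profileOf_succ, profileOf_congr fun j hj => if_pos hj]
    simp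

theorem Edge.inDag_right {u v : Q × ℕ} (he : A.Edge w u v) : A.InDag w v := by
  obtain ⟨⟨p, hp⟩, hv2, hv1⟩ := he
  exact (FinRunTo.extend hp hv2 hv1).1.inDag

namespace IsProfileFun

theorem profileOf_le (hprof : A.IsProfileFun w h) {p : ℕ → Q} {v : Q × ℕ}
    (hp : A.FinRunTo w p v) : A.profileOf p v.2 ≤ h v :=
  profLe_iff_le.1 ((hprof v ⟨p, hp⟩).2 p hp)

theorem length_eq (hprof : A.IsProfileFun w h) {v : Q × ℕ} (hv : A.InDag w v) :
    (h v).length = v.2 + 1 := by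
  obtain ⟨⟨p, -, hp⟩, -⟩ := hprof v hv
  rw [← hp, length_profileOf]

theorem getLast?_eq (hprof : A.IsProfileFun w h) {v : Q × ℕ} (hv : A.InDag w v) :
    (h v).getLast? = some (A.acc v.1) := by
  obtain ⟨⟨p, hrun, hp⟩, -⟩ := hprof v hv
  rw [← hp, getLast?_profileOf, hrun.2.2]

theorem acc_eq_of_eq (hprof : A.IsProfileFun w h) {u v : Q × ℕ} (hu : A.InDag w u)
    (hv : A.InDag w v) (huv : h u = h v) : A.acc u.1 = A.acc v.1 :=
  Option.some.inj ((hprof.getLast?_eq hu).symm.trans (huv ▸ hprof.getLast?_eq hv))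

theorem append_le_of_edge (hprof : A.IsProfileFun w h) {u v : Q × ℕ} (he : A.Edge w u v) :
    h u ++ [A.acc v.1] ≤ h v := by
  obtain ⟨⟨p, hrun, hp⟩, -⟩ := hprof u he.1
  obtain ⟨hrun', hprofile⟩ := FinRunTo.extend hrun he.2.1 he.2.2
  rw [← hp, ← hprofile]
  exact hprof.profileOf_le hrun'

theorem exists_edge_eq_append (hprof : A.IsProfileFun w h) {v : Q × ℕ} (hv : A.InDag w v)
    {n : ℕ} (hv2 : v.2 = n + 1) : ∃ u, A.Edge w u v ∧ h v = h u ++ [A.acc v.1] := by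
  obtain ⟨⟨p, hrun, hp⟩, -⟩ := hprof v hv
  have hu_run : A.FinRunTo w p (p n, n) := ⟨hrun.1, fun j hj => hrun.2.1 j (by omega), rfl⟩
  have hpv : p (n + 1) = v.1 := hv2 ▸ hrun.2.2
  have he : A.Edge w (p n, n) v := ⟨⟨p, hu_run⟩, hv2, hpv ▸ hrun.2.1 n (by omega)⟩
  have hhv : h v = A.profileOf p n ++ [A.acc v.1] := by rw [← hp, hv2, profileOf_succ, hpv]
  refine ⟨(p n, n), he, le_antisymm ?_ (hprof.append_le_of_edge he)⟩
  rw [hhv]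
  exact List.append_le_append_right_of_length_eq
    (by rw [length_profileOf, hprof.length_eq he.1]) (hprof.profileOf_le hu_run) _

theorem eq_append_of_edge' (hprof : A.IsProfileFun w h) {u v : Q × ℕ}
    (he : A.Edge' w h u v) : h v = h u ++ [A.acc v.1] := by
  obtain ⟨u₀, he₀, hv⟩ := hprof.exists_edge_eq_append he.1.inDag_right he.1.2.1
  have hlen : (h u₀).length = (h u).length := by
    rw [hprof.length_eq he₀.1, hprof.length_eq he.1.1]
    have := he₀.2.1; have := he.1.2.1; omega
  refine le_antisymm ?_ (hprof.append_le_of_edge he.1)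
  rw [hv]
  exact List.append_le_append_right_of_length_eq hlen (not_lt.1 (he.2 u₀ he₀)) _

theorem prefix_of_reflTransGen (hprof : A.IsProfileFun w h) {u v : Q × ℕ}
    (huv : Relation.ReflTransGen (A.Edge' w h) u v) : h u <+: h v := by
  induction huv with
  | refl => exact List.prefix_refl _
  | tail _ he ih => exact ih.trans (hprof.eq_append_of_edge' he ▸ List.prefix_append _ _)

theorem take_eq_of_reflTransGen (hprof : A.IsProfileFun w h) {u v : Q × ℕ}
    (hu : A.InDag w u) (huv : Relation.ReflTransGen (A.Edge' w h) u v) :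
    (h v).take (u.2 + 1) = h u := by
  rw [List.prefix_iff_eq_take.1 (hprof.prefix_of_reflTransGen huv), hprof.length_eq hu]

end IsProfileFun

theorem finiteIn'_of_reflTransGen {u v : Q × ℕ}
    (huv : Relation.ReflTransGen (A.Edge' w h) u v) (hu : A.FiniteIn' w h u) :
    A.FiniteIn' w h v :=
  hu.subset fun _ hx => huv.trans hx

theorem not_finiteIn'_of_forall_exists_lt {v : Q × ℕ}
    (hdesc : ∀ K, ∃ u, Relation.ReflTransGen (A.Edge' w h) v u ∧ K < u.2) :
    ¬ A.FiniteIn' w h v := by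
  intro hfin
  obtain ⟨K, hK⟩ := (hfin.image Prod.snd).bddAbove
  obtain ⟨u, hu, hKu⟩ := hdesc K
  exact absurd (hK (Set.mem_image_of_mem _ hu)) (by omega)

theorem exists_reflTransGen_of_forall_exists_edge' {P : Q × ℕ → Prop}
    (hP : ∀ v n, P v → v.2 = n + 1 → ∃ u, A.Edge' w h u v ∧ P u) (n : ℕ) :
    ∀ d v, P v → v.2 = n + d →
      ∃ u, P u ∧ u.2 = n ∧ Relation.ReflTransGen (A.Edge' w h) u v
  | 0, v, hv, hv2 => ⟨v, hv, hv2, .refl⟩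
  | d + 1, v, hv, hv2 => by
    obtain ⟨u', he, hu'⟩ := hP v (n + d) hv hv2
    obtain ⟨u, hu, hu2, huu'⟩ :=
      exists_reflTransGen_of_forall_exists_edge' hP n d u' hu' (by have := he.1.2.1; omega)
    exact ⟨u, hu, hu2, huu'.tail he⟩

variable (A w) in
def OnAcceptingRun (v : Q × ℕ) : Prop :=
  ∃ r, A.IsAcceptingRun w r ∧ r v.2 = v.1

variable (A w h) in
def IsTopAccepting (v : Q × ℕ) : Prop :=
  A.OnAcceptingRun w v ∧ ∀ u, A.OnAcceptingRun w u → u.2 = v.2 → h u ≤ h v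

theorem OnAcceptingRun.inDag {v : Q × ℕ} (hv : A.OnAcceptingRun w v) : A.InDag w v := by
  obtain ⟨r, hr, hrv⟩ := hv
  exact ⟨r, hr.1.1, fun j _ => hr.1.2 j, hrv⟩

theorem OnAcceptingRun.of_edge {u v : Q × ℕ} (he : A.Edge w u v) (hv : A.OnAcceptingRun w v) :
    A.OnAcceptingRun w u := by
  obtain ⟨r, hr, hrv⟩ := hv
  obtain ⟨p, hp⟩ := he.1
  refine ⟨_, isAcceptingRun_splice (r := r) hp ?_ (fun i _ => hr.1.2 i) hr.2,
    by simpa using hp.2.2⟩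
  rw [← he.2.1, hrv]
  exact he.2.2

theorem IsProfileFun.exists_isAcceptingRun_profileOf (hprof : A.IsProfileFun w h)
    {v : Q × ℕ} (hv : A.OnAcceptingRun w v) :
    ∃ r, A.IsAcceptingRun w r ∧ A.profileOf r v.2 = h v := by
  obtain ⟨⟨p, hp, hpv⟩, -⟩ := hprof v hv.inDag
  obtain ⟨r, hr, hrv⟩ := hv
  refine ⟨_, isAcceptingRun_splice (r := r) hp (hrv ▸ hr.1.2 v.2) (fun i _ => hr.1.2 i) hr.2,
    ?_⟩
  rw [← hpv]
  exact profileOf_congr fun j hj => if_pos hj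

theorem IsTopAccepting.eq {u v : Q × ℕ} (hu : A.IsTopAccepting w h u)
    (hv : A.IsTopAccepting w h v) (huv : u.2 = v.2) : h u = h v :=
  le_antisymm (hv.2 u hu.1 huv) (hu.2 v hv.1 huv.symm)

section FiniteStates

variable [Finite Q]

theorem finite_level (n : ℕ) : {v : Q × ℕ | v.2 = n}.Finite :=
  (Set.finite_range fun q : Q => (q, n)).subset fun v hv => ⟨v.1, Prod.ext rfl hv.symm⟩

theorem IsProfileFun.exists_edge' (hprof : A.IsProfileFun w h) {v : Q × ℕ} (hv : A.InDag w v)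
    {n : ℕ} (hv2 : v.2 = n + 1) : ∃ u, A.Edge' w h u v := by
  have hfin : {u | A.Edge w u v}.Finite :=
    (finite_level n).subset fun u (hu : A.Edge w u v) => show u.2 = n by have := hu.2.1; omega
  obtain ⟨u₀, hu₀, -⟩ := hprof.exists_edge_eq_append hv hv2
  obtain ⟨u, hu, hmax⟩ := Set.exists_max_image _ h hfin ⟨u₀, hu₀⟩
  exact ⟨u, hu, fun u' hu' => not_lt.2 (hmax u' hu')⟩

theorem exists_edge'_not_finiteIn' {v : Q × ℕ} (hv : ¬ A.FiniteIn' w h v) :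
    ∃ u, A.Edge' w h v u ∧ ¬ A.FiniteIn' w h u := by
  by_contra! hchildren
  have hsub : {x | Relation.ReflTransGen (A.Edge' w h) v x} ⊆
      {v} ∪ ⋃ u ∈ {u | A.Edge' w h v u}, {x | Relation.ReflTransGen (A.Edge' w h) u x} := by
    intro x hx
    rcases hx.cases_head with rfl | ⟨u, hu, hux⟩
    · exact Or.inl rfl
    · exact Or.inr (Set.mem_biUnion hu hux)
  have hfin : {u | A.Edge' w h v u}.Finite :=
    (finite_level (v.2 + 1)).subset fun u hu => hu.1.2.1
  exact hv (((Set.finite_singleton v).union (hfin.biUnion hchildren)).subset hsub)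

theorem exists_edge'_seq {v : Q × ℕ} (hv : ¬ A.FiniteIn' w h v) :
    ∃ f : ℕ → Q × ℕ, f 0 = v ∧ ∀ i, A.Edge' w h (f i) (f (i + 1)) ∧
      ¬ A.FiniteIn' w h (f i) ∧ (f i).2 = v.2 + i ∧
      Relation.ReflTransGen (A.Edge' w h) v (f i) := by
  obtain ⟨f, rfl, hf⟩ := exists_seq_of_forall_exists (fun _ => exists_edge'_not_finiteIn') hv
  refine ⟨f, rfl, fun i => ⟨(hf i).1, (hf i).2, ?_⟩⟩
  induction i with
  | zero => exact ⟨rfl, .refl⟩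
  | succ i ih => exact ⟨by rw [(hf i).1.1.2.1, ih.1]; omega, ih.2.tail (hf i).1⟩

variable (A w h) in
def levelProfiles (n : ℕ) : Set (List Bool) :=
  h '' {v | A.InDag'' w h v ∧ v.2 = n}

theorem finite_levelProfiles (n : ℕ) : (A.levelProfiles w h n).Finite :=
  ((finite_level n).subset fun _ hv => hv.2).image h

theorem ncard_levelProfiles_le (n : ℕ) : (A.levelProfiles w h n).ncard ≤ Nat.card Q :=
  calc (A.levelProfiles w h n).ncard
      ≤ {v | A.InDag'' w h v ∧ v.2 = n}.ncard :=
        Set.ncard_image_le ((finite_level n).subset fun _ hv => hv.2)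
    _ ≤ (Set.univ : Set Q).ncard := Set.ncard_le_ncard_of_injOn Prod.fst (fun _ _ => trivial)
        (fun _ hu _ hv huv => Prod.ext huv (hu.2.trans hv.2.symm)) Set.finite_univ
    _ = Nat.card Q := Set.ncard_univ Q

theorem IsProfileFun.take_image_levelProfiles (hprof : A.IsProfileFun w h) {n m : ℕ}
    (hnm : n ≤ m) : List.take (n + 1) '' A.levelProfiles w h m = A.levelProfiles w h n := by
  ext P
  constructor
  · rintro ⟨_, ⟨v, ⟨⟨hv, hv_inf⟩, hv2⟩, rfl⟩, rfl⟩
    obtain ⟨u, hu, rfl, huv⟩ := exists_reflTransGen_of_forall_exists_edge'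
      (fun v _ hv hv2 => (hprof.exists_edge' hv hv2).imp fun u he => ⟨he, he.1.1⟩)
      n (m - n) v hv (by omega)
    exact ⟨u, ⟨⟨hu, fun hfin => hv_inf (finiteIn'_of_reflTransGen huv hfin)⟩, rfl⟩,
      (hprof.take_eq_of_reflTransGen hu huv).symm⟩
  · rintro ⟨u, ⟨⟨hu, hu_inf⟩, rfl⟩, rfl⟩
    obtain ⟨f, -, hf⟩ := exists_edge'_seq hu_inf
    obtain ⟨he, hinf, hlev, hreach⟩ := hf (m - u.2)
    exact ⟨h (f (m - u.2)), ⟨f (m - u.2), ⟨⟨he.1.1, hinf⟩, by omega⟩, rfl⟩,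
      hprof.take_eq_of_reflTransGen hu hreach⟩

theorem IsProfileFun.exists_injOn_take (hprof : A.IsProfileFun w h) :
    ∃ N, ∀ m, N ≤ m → Set.InjOn (List.take (N + 1)) (A.levelProfiles w h m) := by
  set c : ℕ → ℕ := fun n => (A.levelProfiles w h n).ncard
  have hbdd : BddAbove (Set.range c) := ⟨Nat.card Q, by
    rintro _ ⟨n, rfl⟩
    exact ncard_levelProfiles_le n⟩
  obtain ⟨N, hN⟩ := Nat.sSup_mem (Set.range_nonempty c) hbdd
  refine ⟨N, fun m hm => (Set.ncard_image_iff (finite_levelProfiles m)).1 (le_antisymm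
    (Set.ncard_image_le (finite_levelProfiles m)) ?_)⟩
  rw [hprof.take_image_levelProfiles hm]
  exact (le_csSup hbdd ⟨m, rfl⟩).trans_eq hN.symm

theorem IsProfileFun.exists_isAcceptingRun_of_unbounded_acc (hprof : A.IsProfileFun w h)
    (hF : ∀ k, ∃ v, A.InDag'' w h v ∧ A.acc v.1 = true ∧ k < v.2) :
    ∃ r, A.IsAcceptingRun w r := by
  obtain ⟨N, hinj⟩ := hprof.exists_injOn_take
  have hfreq : ∃ᶠ K in Filter.atTop, ∃ P ∈ A.levelProfiles w h N,
      ∃ v, A.InDag'' w h v ∧ A.acc v.1 = true ∧ K < v.2 ∧ (h v).take (N + 1) = P := by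
    refine Filter.frequently_atTop.2 fun K => ⟨K, le_rfl, ?_⟩
    obtain ⟨v, hv, hacc, hlt⟩ := hF (max K N)
    refine ⟨_, ?_, v, hv, hacc, by omega, rfl⟩
    rw [← hprof.take_image_levelProfiles (show N ≤ v.2 by omega)]
    exact ⟨h v, ⟨v, ⟨hv, rfl⟩, rfl⟩, rfl⟩
  obtain ⟨_, ⟨v₀, ⟨⟨hv₀, hv₀_inf⟩, hv₀2⟩, rfl⟩, hfreq⟩ :=
    (finite_levelProfiles N).frequently_exists.1 hfreq
  obtain ⟨f, rfl, hf⟩ := exists_edge'_seq hv₀_inf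
  have hacc : ∀ K, ∃ i, K ≤ i ∧ A.acc (f (i - N)).1 = true := by
    intro K
    obtain ⟨b, hb, v, ⟨hv, hv_inf⟩, hacc, hlt, htake⟩ :=
      Filter.frequently_atTop.1 hfreq (K + N)
    obtain ⟨he, hinf, hlev, hreach⟩ := hf (v.2 - N)
    have hfv : h (f (v.2 - N)) = h v :=
      hinj v.2 (by omega) ⟨_, ⟨⟨he.1.1, hinf⟩, by omega⟩, rfl⟩
        ⟨v, ⟨⟨hv, hv_inf⟩, rfl⟩, rfl⟩
        (by rw [htake, ← hprof.take_eq_of_reflTransGen hv₀ hreach, hv₀2])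
    exact ⟨v.2, by omega, (hprof.acc_eq_of_eq he.1.1 hv hfv).trans hacc⟩
  obtain ⟨p, hp⟩ := hv₀
  refine ⟨_, isAcceptingRun_splice (r := fun i => (f (i - N)).1) hp ?_ (fun i hi => ?_) hacc⟩
  · simpa [hv₀2] using (hf 0).1.1.2.2
  · obtain ⟨he, -, hlev, -⟩ := hf (i - N)
    simpa [show i + 1 - N = i - N + 1 by omega, hlev, hv₀2, show N + (i - N) = i by omega]
      using he.1.2.2

theorem exists_isTopAccepting {r : ℕ → Q} (hr : A.IsAcceptingRun w r) (n : ℕ) :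
    ∃ v, A.IsTopAccepting w h v ∧ v.2 = n := by
  obtain ⟨v, ⟨hv, hv2⟩, hmax⟩ :=
    Set.exists_max_image {v | A.OnAcceptingRun w v ∧ v.2 = n} h
      ((finite_level n).subset fun _ hv => hv.2) ⟨(r n, n), ⟨r, hr, rfl⟩, rfl⟩
  exact ⟨v, ⟨hv, fun u hu hu2 => hmax u ⟨hu, hu2.trans hv2⟩⟩, hv2⟩

theorem IsProfileFun.exists_edge'_isTopAccepting (hprof : A.IsProfileFun w h) {v : Q × ℕ}
    (hv : A.IsTopAccepting w h v) {n : ℕ} (hv2 : v.2 = n + 1) :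
    ∃ u, A.Edge' w h u v ∧ A.IsTopAccepting w h u := by
  obtain ⟨u, he⟩ := hprof.exists_edge' hv.1.inDag hv2
  refine ⟨u, he, hv.1.of_edge he.1, fun u' hu' hu'2 => ?_⟩
  have hu'_dag := hu'.inDag
  obtain ⟨r, hr, hru'⟩ := hu'
  have hc : A.Edge w u' (r (u'.2 + 1), u'.2 + 1) := ⟨hu'_dag, rfl, hru' ▸ hr.1.2 u'.2⟩
  have hcv : h (r (u'.2 + 1), u'.2 + 1) ≤ h v :=
    hv.2 _ ⟨r, hr, rfl⟩ (show u'.2 + 1 = v.2 by have := he.1.2.1; omega)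
  refine List.le_of_append_le_append_of_length_eq ?_
    ((hprof.append_le_of_edge hc).trans (hcv.trans (hprof.eq_append_of_edge' he).le))
  rw [hprof.length_eq hu'_dag, hprof.length_eq he.1.1, hu'2]

theorem IsProfileFun.profileOf_eq_of_isTopAccepting (hprof : A.IsProfileFun w h)
    {r : ℕ → Q} (hr : A.IsAcceptingRun w r) {v₀ : Q × ℕ}
    (hv₀ : A.IsTopAccepting w h v₀)
    (hr₀ : A.profileOf r v₀.2 = h v₀)
    (hrej : ∀ v, A.IsTopAccepting w h v → v₀.2 < v.2 → A.acc v.1 = false) :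
    ∀ d v, A.IsTopAccepting w h v → v.2 = v₀.2 + d → A.profileOf r v.2 = h v
  | 0, v, hv, hv2 => by rw [hv2, Nat.add_zero, hr₀, hv₀.eq hv hv2.symm]
  | d + 1, v, hv, hv2 => by
    obtain ⟨u, he, hu⟩ := hprof.exists_edge'_isTopAccepting hv hv2
    have hu2 : u.2 = v₀.2 + d := by have := he.1.2.1; omega
    have hhv : h v = h u ++ [false] := by
      rw [hprof.eq_append_of_edge' he, hrej v hv (by omega)]
    have hrv : A.profileOf r v.2 = h u ++ [A.acc (r v.2)] := by
      rw [he.1.2.1, profileOf_succ,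
        hprof.profileOf_eq_of_isTopAccepting hr hv₀ hr₀ hrej d u hu hu2]
    have hle : A.profileOf r v.2 ≤ h v :=
      (hprof.profileOf_le (hr.1.finRunTo v.2)).trans (hv.2 _ ⟨r, hr, rfl⟩ rfl)
    rw [hrv, hhv] at hle
    rw [hrv, hhv,
      Bool.eq_false_of_le_false (List.le_of_append_singleton_le_append_singleton hle)]

theorem IsProfileFun.exists_isTopAccepting_acc (hprof : A.IsProfileFun w h) {r : ℕ → Q}
    (hr : A.IsAcceptingRun w r) (k : ℕ) :
    ∃ v, A.IsTopAccepting w h v ∧ k < v.2 ∧ A.acc v.1 = true := by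
  by_contra! hrej
  obtain ⟨v₀, hv₀, rfl⟩ := exists_isTopAccepting (h := h) hr k
  obtain ⟨r₀, hr₀, hprofile⟩ := hprof.exists_isAcceptingRun_profileOf hv₀.1
  obtain ⟨i, hi, hacc⟩ := hr₀.2 (v₀.2 + 1)
  obtain ⟨v, hv, rfl⟩ := exists_isTopAccepting (h := h) hr₀ i
  have hrv := hprof.profileOf_eq_of_isTopAccepting hr₀ hv₀ hprofile
    (fun v hv hlt => by simpa using hrej v hv hlt) (v.2 - v₀.2) v hv (by omega)
  have hlast := getLast?_profileOf (A := A) r₀ v.2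
  rw [hrv, hprof.getLast?_eq hv.1.inDag, hacc] at hlast
  exact hrej v hv (by omega) (Option.some.inj hlast)

theorem IsProfileFun.exists_inDag''_acc_lt (hprof : A.IsProfileFun w h) {r : ℕ → Q}
    (hr : A.IsAcceptingRun w r) (k : ℕ) :
    ∃ v, A.InDag'' w h v ∧ A.acc v.1 = true ∧ k < v.2 := by
  obtain ⟨v₀, hv₀, hk, hacc⟩ := hprof.exists_isTopAccepting_acc hr k
  have hfreq : ∃ᶠ m in Filter.atTop, ∃ u ∈ {u | A.IsTopAccepting w h u ∧ u.2 = v₀.2},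
      ∃ v, Relation.ReflTransGen (A.Edge' w h) u v ∧ m < v.2 := by
    refine Filter.frequently_atTop.2 fun m => ⟨m, le_rfl, ?_⟩
    obtain ⟨v, hv, hv2⟩ := exists_isTopAccepting (h := h) hr (v₀.2 + (m + 1))
    obtain ⟨u, hu, hu2, huv⟩ := exists_reflTransGen_of_forall_exists_edge'
      (fun _ _ hv hv2 => hprof.exists_edge'_isTopAccepting hv hv2) v₀.2 (m + 1) v hv hv2
    exact ⟨u, ⟨hu, hu2⟩, v, huv, by omega⟩
  obtain ⟨u, ⟨hu, hu2⟩, hfreq⟩ :=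
    ((finite_level v₀.2).subset fun _ hu => hu.2).frequently_exists.1 hfreq
  refine ⟨u, ⟨hu.1.inDag, not_finiteIn'_of_forall_exists_lt fun K => ?_⟩, ?_, by omega⟩
  · obtain ⟨m, hm, v, huv, hv⟩ := Filter.frequently_atTop.1 hfreq K
    exact ⟨v, huv, by omega⟩
  · rw [hprof.acc_eq_of_eq hu.1.inDag hv₀.1.inDag (hu.eq hv₀ hu2), hacc]

theorem IsProfileFun.exists_isAcceptingRun_iff (hprof : A.IsProfileFun w h) :
    (∃ r, A.IsAcceptingRun w r) ↔
      ∀ k, ∃ v, A.InDag'' w h v ∧ A.acc v.1 = true ∧ k < v.2 :=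
  ⟨fun ⟨_, hr⟩ => hprof.exists_inDag''_acc_lt hr,
    hprof.exists_isAcceptingRun_of_unbounded_acc⟩

end FiniteStates

end NBW

/-- `G` is rejecting iff it has an F-finite level. -/
theorem stmt9 {Q σ : Type} [Finite Q] (A : NBW Q σ) (w : ℕ → σ) (h : Q × ℕ → List Bool)
    (hprof : A.IsProfileFun w h) :
    (¬ ∃ π : ℕ → Q × ℕ, A.AcceptingPath (A.Edge w) π) ↔
    (∃ k : ℕ, ∀ v, A.InDag w v → A.acc v.1 = true → k < v.2 → A.FiniteIn' w h v) := by
  rw [NBW.exists_acceptingPath_iff, hprof.exists_isAcceptingRun_iff]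
  simp only [NBW.InDag'', not_forall, not_exists]
  exact exists_congr fun k => forall_congr' fun v => by tauto
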